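/- Let g ≥ 2, r ≥ 1. With the Dehn-twist transformations Uᵢ, Vᵢ, Wᵢ on (ℤ/r)^{2g} as before, any tuple of the form (0,0,…,0,0,0,d) (all entries zero except the last) can be transformed to (0,0,…,0,0,0,d+2) by a finite composition of the transformations and their inverses. Consequently, for r odd, (0,…,0,d) and (0,…,0,d') are in the same orbit for all d, d' ∈ ℤ/r. -/
import Mathlib


/-- An `r`-th root, written as a tuple `(s₁,t₁,…,s_g,t_g)` in `(ℤ/r)^{2g}`,
encoded as a function `Fin g → ZMod r × ZMod r`. -/
abbrev RootTuple (r g : ℕ) := Fin g → ZMod r × ZMod r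

/-- One application of a basic Dehn twist `Uᵢ`, `Vᵢ` or `W_{i,i+1}`. -/
def dehnStep (r g : ℕ) (δ δ' : RootTuple r g) : Prop :=
  (∃ i : Fin g, δ' = Function.update δ i ((δ i).1, (δ i).2 - (δ i).1)) ∨
  (∃ i : Fin g, δ' = Function.update δ i ((δ i).1 + (δ i).2, (δ i).2)) ∨
  (∃ (i : Fin g) (hi : (i : ℕ) + 1 < g),
    δ' = Function.update
      (Function.update δ i
        ((δ i).1, (δ i).2 - (δ i).1 + (δ ⟨i + 1, hi⟩).1 - 1))
      ⟨i + 1, hi⟩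
      ((δ ⟨i + 1, hi⟩).1, (δ ⟨i + 1, hi⟩).2 + (δ i).1 - (δ ⟨i + 1, hi⟩).1 + 1))

/-- Two-point modification of the zero tuple. -/
def twoUpd (r g : ℕ) (a b : Fin g) (x y : ZMod r × ZMod r) : RootTuple r g :=
  Function.update (Function.update (fun _ => ((0 : ZMod r), (0 : ZMod r))) a x) b y

lemma twoUpd_apply_a {r g : ℕ} {a b : Fin g} (hab : a ≠ b) (x y : ZMod r × ZMod r) :
    twoUpd r g a b x y a = x := by
  simp [twoUpd, Function.update_of_ne hab]

lemma twoUpd_apply_b {r g : ℕ} (a b : Fin g) (x y : ZMod r × ZMod r) :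
    twoUpd r g a b x y b = y := by
  simp [twoUpd]

lemma update_twoUpd_a {r g : ℕ} {a b : Fin g} (hab : a ≠ b) (x y x' : ZMod r × ZMod r) :
    Function.update (twoUpd r g a b x y) a x' = twoUpd r g a b x' y := by
  unfold twoUpd
  rw [Function.update_comm hab.symm, Function.update_idem]

lemma update_twoUpd_b {r g : ℕ} (a b : Fin g) (x y y' : ZMod r × ZMod r) :
    Function.update (twoUpd r g a b x y) b y' = twoUpd r g a b x y' := by
  unfold twoUpd
  rw [Function.update_idem]

lemma twoUpd_zero {r g : ℕ} {a b : Fin g} (hab : a ≠ b) (y : ZMod r × ZMod r) :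
    twoUpd r g a b (0, 0) y
      = Function.update (fun _ => ((0 : ZMod r), (0 : ZMod r))) b y := by
  funext i
  rcases eq_or_ne i b with rfl | h
  · simp [twoUpd]
  · rcases eq_or_ne i a with rfl | h'
    · simp [twoUpd, Function.update_of_ne h, Function.update_of_ne hab]
    · simp [twoUpd, Function.update_of_ne h, Function.update_of_ne h']

/-- The tuple `(0,…,0,0,d)` can be moved to `(0,…,0,0,d+2)` by Dehn twists;
hence for `r` odd all `(0,…,0,d)` lie in a single orbit. -/
theorem last_entry_step_two (r g : ℕ) (hr : 1 ≤ r) (hg : 2 ≤ g) :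
    (∀ d : ZMod r,
      Relation.EqvGen (dehnStep r g)
        (Function.update (fun _ => ((0 : ZMod r), (0 : ZMod r)))
          ⟨g - 1, by omega⟩ (0, d))
        (Function.update (fun _ => ((0 : ZMod r), (0 : ZMod r)))
          ⟨g - 1, by omega⟩ (0, d + 2))) ∧
    (Odd r → ∀ d d' : ZMod r,
      Relation.EqvGen (dehnStep r g)
        (Function.update (fun _ => ((0 : ZMod r), (0 : ZMod r)))
          ⟨g - 1, by omega⟩ (0, d))
        (Function.update (fun _ => ((0 : ZMod r), (0 : ZMod r)))
          ⟨g - 1, by omega⟩ (0, d'))) := by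
  have hg1 : g - 1 < g := by omega
  have hg2 : g - 2 < g := by omega
  set a : Fin g := ⟨g - 2, hg2⟩ with ha
  set b : Fin g := ⟨g - 1, hg1⟩ with hb
  have hab : a ≠ b := by
    simp only [ha, hb, Fin.mk.injEq, ne_eq]
    omega
  have hi : (a : ℕ) + 1 < g := by simp only [ha]; omega
  have hsucc : (⟨(a : ℕ) + 1, hi⟩ : Fin g) = b := by
    apply Fin.ext
    simp only [ha, hb]
    omega
  set T : ZMod r × ZMod r → ZMod r × ZMod r → RootTuple r g := twoUpd r g a b with hT
  -- single step lemmas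
  have stepU : ∀ x y x' : ZMod r × ZMod r, x' = (x.1, x.2 - x.1) →
      Relation.EqvGen (dehnStep r g) (T x y) (T x' y) := by
    intro x y x' hx; subst hx
    refine Relation.EqvGen.rel _ _ (Or.inl ⟨a, ?_⟩)
    rw [hT, twoUpd_apply_a hab, update_twoUpd_a hab]
  have stepV : ∀ x y x' : ZMod r × ZMod r, x' = (x.1 + x.2, x.2) →
      Relation.EqvGen (dehnStep r g) (T x y) (T x' y) := by
    intro x y x' hx; subst hx
    refine Relation.EqvGen.rel _ _ (Or.inr (Or.inl ⟨a, ?_⟩))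
    rw [hT, twoUpd_apply_a hab, update_twoUpd_a hab]
  have stepW : ∀ x y x' y' : ZMod r × ZMod r,
      x' = (x.1, x.2 - x.1 + y.1 - 1) → y' = (y.1, y.2 + x.1 - y.1 + 1) →
      Relation.EqvGen (dehnStep r g) (T x y) (T x' y') := by
    intro x y x' y' hx hy; subst hx; subst hy
    refine Relation.EqvGen.rel _ _ (Or.inr (Or.inr ⟨a, hi, ?_⟩))
    rw [hT, hsucc, twoUpd_apply_a hab, twoUpd_apply_b, update_twoUpd_a hab,
      update_twoUpd_b]
  have part1 : ∀ d : ZMod r,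
      Relation.EqvGen (dehnStep r g)
        (Function.update (fun _ => ((0 : ZMod r), (0 : ZMod r)))
          ⟨g - 1, by omega⟩ (0, d))
        (Function.update (fun _ => ((0 : ZMod r), (0 : ZMod r)))
          ⟨g - 1, by omega⟩ (0, d + 2)) := by
    intro d
    have h0 : Function.update (fun _ => ((0 : ZMod r), (0 : ZMod r)))
        (⟨g - 1, by omega⟩ : Fin g) (0, d) = T (0, 0) (0, d) :=
      (twoUpd_zero hab _).symm
    have h6 : Function.update (fun _ => ((0 : ZMod r), (0 : ZMod r)))
        (⟨g - 1, by omega⟩ : Fin g) (0, d + 2) = T (0, 0) (0, d + 2) :=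
      (twoUpd_zero hab _).symm
    rw [h0, h6]
    refine Relation.EqvGen.trans _ (T (0, -1) (0, d + 1)) _
      (stepW (0, 0) (0, d) _ _ (by norm_num) (by norm_num)) ?_
    refine Relation.EqvGen.trans _ (T (-1, -1) (0, d + 1)) _
      (stepV (0, -1) _ _ (by norm_num)) ?_
    refine Relation.EqvGen.trans _ (T (-1, 0) (0, d + 1)) _
      (stepU (-1, -1) _ _ (by norm_num)) ?_
    refine Relation.EqvGen.trans _ (T (-1, 1) (0, d + 1)) _
      (stepU (-1, 0) _ _ (by norm_num)) ?_
    refine Relation.EqvGen.trans _ (T (0, 1) (0, d + 1)) _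
      (stepV (-1, 1) _ _ (by norm_num)) ?_
    exact stepW (0, 1) (0, d + 1) _ _ (by norm_num) (by norm_num; ring)
  refine ⟨part1, ?_⟩
  intro hodd d d'
  haveI : NeZero r := ⟨by omega⟩
  have key : ∀ n : ℕ, ∀ d : ZMod r,
      Relation.EqvGen (dehnStep r g)
        (Function.update (fun _ => ((0 : ZMod r), (0 : ZMod r)))
          ⟨g - 1, by omega⟩ (0, d))
        (Function.update (fun _ => ((0 : ZMod r), (0 : ZMod r)))
          ⟨g - 1, by omega⟩ (0, d + 2 * n)) := by
    intro n
    induction n with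
    | zero =>
      intro d
      simpa using Relation.EqvGen.refl _
    | succ n ih =>
      intro d
      have e : d + 2 * ((n + 1 : ℕ) : ZMod r) = d + 2 * (n : ℕ) + 2 := by
        push_cast; ring
      rw [e]
      exact Relation.EqvGen.trans _ _ _ (ih d) (part1 (d + 2 * (n : ℕ)))
  have hu : IsUnit (2 : ZMod r) := by
    have h2 : ((2 : ℕ) : ZMod r) = (2 : ZMod r) := by push_cast; ring
    rw [← h2]
    rw [ZMod.isUnit_iff_coprime]
    rwa [Nat.coprime_two_left]
  obtain ⟨e, he⟩ := hu.exists_right_inv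
  set c : ZMod r := e * (d' - d) with hc
  have hc2 : 2 * c = d' - d := by rw [hc, ← mul_assoc, he, one_mul]
  have hn : ((c.val : ℕ) : ZMod r) = c := by
    simp [ZMod.natCast_val, ZMod.cast_id]
  have := key c.val d
  rw [hn, hc2] at this
  have e2 : d + (d' - d) = d' := by ring
  rwa [e2] at this
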